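/- arXiv:2006.05773 — 4 statements merged into one kernel-verified Lean document; each statement's English description precedes it below -/
import Mathlib

section
/- Let F ∈ C⁰(T⁵) and let φ ∈ C²(T⁵) be a solution of equation (★). Then at every point A > 0 and B > 0, and 0 < 2e^{F/2} ≤ Δφ + 2, where Δφ = φ_{11}+φ_{22}+φ_{33}+φ_{44}+φ_{55}. -/
open MeasureTheory

/-- Partial derivative in the `i`-th coordinate direction. -/
noncomputable def pd {n : ℕ} (i : Fin n) (f : (Fin n → ℝ) → ℝ) : (Fin n → ℝ) → ℝ :=
  fun x => fderiv ℝ f x (Pi.single i 1)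

/-- Second partial derivative `∂²f/∂x^i∂x^j`. -/
noncomputable def pd2 {n : ℕ} (i j : Fin n) (f : (Fin n → ℝ) → ℝ) : (Fin n → ℝ) → ℝ :=
  pd i (pd j f)

/-- A function on `ℝⁿ` that is `1`-periodic in every coordinate, i.e. a function on `Tⁿ`. -/
def PeriodicPi {n : ℕ} (f : (Fin n → ℝ) → ℝ) : Prop :=
  ∀ x : Fin n → ℝ, ∀ i : Fin n, f (x + Pi.single i 1) = f x

/-- The Euclidean Laplacian. -/
noncomputable def lap {n : ℕ} (f : (Fin n → ℝ) → ℝ) : (Fin n → ℝ) → ℝ :=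
  fun x => ∑ i, pd2 i i f x

/-- Equation (★): the reduction of the quaternionic Monge–Ampère equation to `T⁵`. -/
def EqStar (F φ : (Fin 5 → ℝ) → ℝ) : Prop :=
  ∀ x : Fin 5 → ℝ,
    (pd2 0 0 φ x + pd2 1 1 φ x + pd2 2 2 φ x + pd2 3 3 φ x + 1) * (pd2 4 4 φ x + 1)
      - (pd2 0 4 φ x) ^ 2 - (pd2 1 4 φ x) ^ 2 - (pd2 2 4 φ x) ^ 2 - (pd2 3 4 φ x) ^ 2
      = Real.exp (F x)

/-!
The determinant identity (★) gives `A B ≥ e^F > 0`, so the continuous function `B` never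
vanishes on the connected space `ℝ⁵`. By periodicity and Rolle's theorem `φ₅₅` vanishes
somewhere, where `B = 1`; hence `B > 0` everywhere, and then `A > 0`. Finally
`Δφ + 2 = A + B ≥ 2 √(A B) ≥ 2 e^{F/2}` by AM–GM.
-/

section Calculus

variable {n : ℕ} {f : (Fin n → ℝ) → ℝ}

theorem contDiff_pd {k : WithTop ℕ∞} (hf : ContDiff ℝ (k + 1) f) (i : Fin n) :
    ContDiff ℝ k (pd i f) :=
  (hf.fderiv_right le_rfl).clm_apply contDiff_const

theorem continuous_pd2 (hf : ContDiff ℝ 2 f) (i j : Fin n) : Continuous (pd2 i j f) :=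
  (contDiff_pd (k := 0) (contDiff_pd (k := 1) hf j) i).continuous

theorem periodicPi_pd (hf : PeriodicPi f) (i : Fin n) : PeriodicPi (pd i f) := by
  intro x j
  simp only [pd, ← fderiv_comp_add_right, funext fun y => hf y j]

theorem hasDerivAt_comp_smul_single (hf : Differentiable ℝ f) (i : Fin n) (t : ℝ) :
    HasDerivAt (fun s : ℝ => f (s • Pi.single i 1)) (pd i f (t • Pi.single i 1)) t := by
  simpa [pd, Function.comp_def] using
    (hf _).hasFDerivAt.comp_hasDerivAt t ((hasDerivAt_id t).smul_const _)

theorem exists_pd_eq_zero_of_periodicPi (hf : Differentiable ℝ f) (hper : PeriodicPi f)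
    (i : Fin n) : ∃ x, pd i f x = 0 := by
  have hperiod : f ((0 : ℝ) • Pi.single i 1) = f ((1 : ℝ) • Pi.single i 1) := by
    simpa using (hper 0 i).symm
  obtain ⟨t, -, ht⟩ := exists_hasDerivAt_eq_zero (f := fun s : ℝ => f (s • Pi.single i 1))
    zero_lt_one (hf.continuous.comp (by fun_prop)).continuousOn hperiod
    fun t _ => hasDerivAt_comp_smul_single hf i t
  exact ⟨_, ht⟩

end Calculus

theorem pos_of_forall_ne_zero {X : Type*} [TopologicalSpace X] [PreconnectedSpace X]
    {g : X → ℝ} (hg : Continuous g) (hne : ∀ x, g x ≠ 0) {x₀ : X} (h₀ : 0 < g x₀) (x : X) :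
    0 < g x := by
  by_contra! hx
  obtain ⟨y, -, hy⟩ := isPreconnected_univ.intermediate_value (Set.mem_univ x)
    (Set.mem_univ x₀) hg.continuousOn ⟨hx, h₀.le⟩
  exact hne y hy

theorem EqStar.exp_le_mul {F φ : (Fin 5 → ℝ) → ℝ} (heq : EqStar F φ) (x : Fin 5 → ℝ) :
    Real.exp (F x) ≤
      (pd2 0 0 φ x + pd2 1 1 φ x + pd2 2 2 φ x + pd2 3 3 φ x + 1) * (pd2 4 4 φ x + 1) := by
  nlinarith [heq x, sq_nonneg (pd2 0 4 φ x), sq_nonneg (pd2 1 4 φ x),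
    sq_nonneg (pd2 2 4 φ x), sq_nonneg (pd2 3 4 φ x)]

theorem A_pos_B_pos_lap_lower_bound_general
    (F φ : (Fin 5 → ℝ) → ℝ)
    (hφ : ContDiff ℝ 2 φ) (hφper : PeriodicPi φ) (heq : EqStar F φ) :
    ∀ x : Fin 5 → ℝ,
      0 < pd2 0 0 φ x + pd2 1 1 φ x + pd2 2 2 φ x + pd2 3 3 φ x + 1 ∧
      0 < pd2 4 4 φ x + 1 ∧
      0 < 2 * Real.exp (F x / 2) ∧
      2 * Real.exp (F x / 2) ≤ lap φ x + 2 := by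
  set A := fun x => pd2 0 0 φ x + pd2 1 1 φ x + pd2 2 2 φ x + pd2 3 3 φ x + 1
  set B := fun x => pd2 4 4 φ x + 1
  have hAB : ∀ x, 0 < A x * B x := fun x => (Real.exp_pos _).trans_le (heq.exp_le_mul x)
  obtain ⟨x₀, hx₀⟩ := exists_pd_eq_zero_of_periodicPi
    ((contDiff_pd (k := 1) hφ 4).differentiable one_ne_zero) (periodicPi_pd hφper 4) 4
  have hB : ∀ x, 0 < B x :=
    pos_of_forall_ne_zero ((continuous_pd2 hφ 4 4).add continuous_const)
      (fun x hx => (hAB x).ne' (by rw [hx, mul_zero])) (x₀ := x₀) (by simp [B, pd2, hx₀])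
  have hA : ∀ x, 0 < A x := fun x => (mul_pos_iff_of_pos_right (hB x)).mp (hAB x)
  intro x
  have hlap : lap φ x + 2 = A x + B x := by
    simp only [lap, A, B, Fin.sum_univ_five]; ring
  have hsq : Real.exp (F x / 2) ^ 2 = Real.exp (F x) := by
    rw [← Real.exp_nat_mul]; ring_nf
  refine ⟨hA x, hB x, by positivity, ?_⟩
  rw [hlap]
  exact two_mul_le_add_of_sq_le_mul (hA x).le (hB x).le (hsq ▸ heq.exp_le_mul x)

/-- For a solution of (★): `A > 0`, `B > 0` and `0 < 2e^{F/2} ≤ Δφ + 2` at every point. -/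
theorem A_pos_B_pos_lap_lower_bound
    (F φ : (Fin 5 → ℝ) → ℝ) (hF : Continuous F) (hFper : PeriodicPi F)
    (hφ : ContDiff ℝ 2 φ) (hφper : PeriodicPi φ) (heq : EqStar F φ) :
    ∀ x : Fin 5 → ℝ,
      0 < pd2 0 0 φ x + pd2 1 1 φ x + pd2 2 2 φ x + pd2 3 3 φ x + 1 ∧
      0 < pd2 4 4 φ x + 1 ∧
      0 < 2 * Real.exp (F x / 2) ∧
      2 * Real.exp (F x / 2) ≤ lap φ x + 2 :=
  A_pos_B_pos_lap_lower_bound_general F φ hφ hφper heq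
end

section
/- Let n ≥ 1, let φ ∈ C⁴(Tⁿ) (a ℤⁿ-periodic C⁴ function on ℝⁿ), fix μ ∈ ℝ, and let p₀ be a point where Φ = (Δφ + 2)e^{−μφ} attains its maximum. For i, j = 1,…,n define η_{ij} = μ(Δφ+2)(φ_{ij} + μ φ_i φ_j) − Δφ_{ij}, where φ_i = ∂φ/∂x^i, φ_{ij} = ∂²φ/∂x^i∂x^j and Δ is the Euclidean Laplacian. Then η_{ii}(p₀) ≥ 0 for every i, and √(η_{ii}(p₀) η_{jj}(p₀)) ≥ |η_{ij}(p₀)| for every i, j. -/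
open MeasureTheory

/-- The quantity `η_{ij} = μ(Δφ+2)(φ_{ij} + μ φ_i φ_j) − Δφ_{ij}`. -/
noncomputable def eta {n : ℕ} (φ : (Fin n → ℝ) → ℝ) (μ : ℝ) (i j : Fin n) :
    (Fin n → ℝ) → ℝ :=
  fun x => μ * (lap φ x + 2) * (pd2 i j φ x + μ * pd i φ x * pd j φ x) - lap (pd2 i j φ) x

/-!
At a critical point of `Φ = (Δφ + 2)e^{-μφ}` one has `∂ₐΔφ = μ(Δφ + 2)φₐ`. Substituting this into
the second derivatives of `Φ`, and using that `∂ₐ∂_b` commutes with `Δ`, gives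
`∂ₐ∂_bΦ(p₀) = -η_{ab}(p₀)e^{-μφ(p₀)}`. At a maximum the Hessian of `Φ` is negative semidefinite,
so `η(p₀)` is a positive semidefinite symmetric bilinear form: its diagonal is nonnegative and its
entries satisfy the Cauchy–Schwarz inequality `η_{ij}² ≤ η_{ii}η_{jj}`.
-/

open Filter Topology

theorem IsLocalMax.deriv_deriv_nonpos {f : ℝ → ℝ} {x₀ : ℝ} (h : IsLocalMax f x₀)
    (hc : ContinuousAt f x₀) : deriv (deriv f) x₀ ≤ 0 := by
  by_contra! hpos
  have hmin : IsLocalMin f x₀ := isLocalMin_of_deriv_deriv_pos hpos h.deriv_eq_zero hc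
  -- by the second-derivative test `x₀` is also a local minimum, so `f` is locally constant
  have hconst : f =ᶠ[𝓝 x₀] fun _ => f x₀ :=
    (hmin.and h).mono fun x hx => le_antisymm hx.2 hx.1
  have hflat : deriv (deriv f) x₀ = 0 := by
    rw [hconst.deriv.deriv_eq]
    simp
  exact hpos.ne' hflat

theorem ContDiff.deriv_deriv_comp_add_smul {E F : Type*} [NormedAddCommGroup E] [NormedSpace ℝ E]
    [NormedAddCommGroup F] [NormedSpace ℝ F] {f : E → F} (hf : ContDiff ℝ 2 f) (x v : E) (t : ℝ) :
    deriv (deriv fun s : ℝ => f (x + s • v)) t = fderiv ℝ (fderiv ℝ f) (x + t • v) v v := by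
  have hline : ∀ s : ℝ, HasDerivAt (fun s : ℝ => x + s • v) v s := fun s => by
    simpa using ((hasDerivAt_id s).smul_const v).const_add x
  have hderiv : deriv (fun s : ℝ => f (x + s • v)) = fun s => fderiv ℝ f (x + s • v) v :=
    funext fun s =>
      ((hf.differentiable two_ne_zero _).hasFDerivAt.comp_hasDerivAt s (hline s)).deriv
  rw [hderiv]
  have hdf : HasFDerivAt (fderiv ℝ f) (fderiv ℝ (fderiv ℝ f) (x + t • v)) (x + t • v) :=
    ((hf.fderiv_right (m := 1) le_rfl).differentiable one_ne_zero _).hasFDerivAt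
  have h2 : HasDerivAt (fun s : ℝ => fderiv ℝ f (x + s • v) v)
      (fderiv ℝ (fderiv ℝ f) (x + t • v) v v) t := by
    have h1 : HasDerivAt (fun s : ℝ => fderiv ℝ f (x + s • v))
        (fderiv ℝ (fderiv ℝ f) (x + t • v) v) t :=
      hdf.comp_hasDerivAt t (hline t)
    simpa using h1.clm_apply (hasDerivAt_const t v)
  exact h2.deriv

theorem IsLocalMax.fderiv_fderiv_apply_self_nonpos {E : Type*} [NormedAddCommGroup E]
    [NormedSpace ℝ E] {f : E → ℝ} {x : E} (h : IsLocalMax f x) (hf : ContDiff ℝ 2 f) (v : E) :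
    fderiv ℝ (fderiv ℝ f) x v v ≤ 0 := by
  have hline : Continuous fun t : ℝ => x + t • v := by fun_prop
  have hmax : IsLocalMax (fun t : ℝ => f (x + t • v)) 0 :=
    IsLocalMax.comp_continuous (by simpa using h) hline.continuousAt
  simpa using (hf.deriv_deriv_comp_add_smul x v 0).symm.trans_le
    (hmax.deriv_deriv_nonpos (hf.continuous.comp hline).continuousAt)

theorem IsLocalMax.isPosSemidef_neg_fderiv_fderiv {E : Type*} [NormedAddCommGroup E]
    [NormedSpace ℝ E] {f : E → ℝ} {x : E} (h : IsLocalMax f x) (hf : ContDiff ℝ 2 f) :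
    LinearMap.BilinForm.IsPosSemidef (-(fderiv ℝ (fderiv ℝ f) x).toLinearMap₁₂) where
  eq u w := by simp [hf.contDiffAt.isSymmSndFDerivAt (by simp) u w]
  nonneg v := by simpa using h.fderiv_fderiv_apply_self_nonpos hf v

theorem LinearMap.BilinForm.IsPosSemidef.sq_apply_le_mul_apply_self {K M : Type*} [Field K]
    [LinearOrder K] [IsStrictOrderedRing K] [AddCommGroup M] [Module K M]
    {B : LinearMap.BilinForm K M} (hB : B.IsPosSemidef) (u w : M) :
    B u w ^ 2 ≤ B u u * B w w := by
  have hquad : ∀ t : K, 0 ≤ B u u * (t * t) + 2 * B u w * t + B w w := fun t => by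
    have := hB.nonneg (t • u + w)
    simp only [map_add, map_smul, LinearMap.add_apply, LinearMap.smul_apply, smul_eq_mul,
      ← hB.eq u w] at this
    linarith
  have := discrim_le_zero hquad
  rw [discrim] at this
  linarith

section PartialDerivatives

variable {n : ℕ} {f g : (Fin n → ℝ) → ℝ} {x : Fin n → ℝ} {i j : Fin n}

theorem ContDiff.pd {m k : WithTop ℕ∞} (hf : ContDiff ℝ k f) (h : m + 1 ≤ k) (i : Fin n) :
    ContDiff ℝ m (pd i f) :=
  (hf.fderiv_right h).clm_apply contDiff_const

theorem ContDiff.pd2 {m k : WithTop ℕ∞} (hf : ContDiff ℝ k f) (h : m + 2 ≤ k)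
    (i j : Fin n) : ContDiff ℝ m (pd2 i j f) :=
  (hf.pd (m := m + 1) (by rwa [add_assoc, one_add_one_eq_two]) j).pd le_rfl i

theorem ContDiff.lap {m k : WithTop ℕ∞} (hf : ContDiff ℝ k f) (h : m + 2 ≤ k) :
    ContDiff ℝ m (lap f) :=
  ContDiff.sum fun i _ => hf.pd2 h i i

theorem pd2_eq_fderiv_fderiv (hf : ContDiff ℝ 2 f) (i j : Fin n) (x : Fin n → ℝ) :
    pd2 i j f x = fderiv ℝ (fderiv ℝ f) x (Pi.single i 1) (Pi.single j 1) := by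
  have hdf : DifferentiableAt ℝ (fderiv ℝ f) x :=
    (hf.fderiv_right (m := 1) le_rfl).differentiable one_ne_zero x
  have hpd : pd j f = fun y => fderiv ℝ f y (Pi.single j 1) := rfl
  rw [pd2, pd, hpd, fderiv_clm_apply hdf (differentiableAt_const _)]
  simp

theorem pd_comm (hf : ContDiff ℝ 2 f) (i j : Fin n) : pd i (pd j f) = pd j (pd i f) := by
  funext x
  change pd2 i j f x = pd2 j i f x
  rw [pd2_eq_fderiv_fderiv hf, pd2_eq_fderiv_fderiv hf]
  exact hf.contDiffAt.isSymmSndFDerivAt (by simp) _ _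

theorem pd_sub (hf : DifferentiableAt ℝ f x) (hg : DifferentiableAt ℝ g x) :
    pd i (fun y => f y - g y) x = pd i f x - pd i g x := by
  simp [pd, fderiv_fun_sub hf hg]

theorem pd_add_const (c : ℝ) : pd i (fun y => f y + c) x = pd i f x := by
  simp [pd]

theorem pd_mul (hf : DifferentiableAt ℝ f x) (hg : DifferentiableAt ℝ g x) :
    pd i (fun y => f y * g y) x = pd i f x * g x + f x * pd i g x := by
  simp [pd, fderiv_fun_mul hf hg]
  ring

theorem pd_const_mul (c : ℝ) (hf : DifferentiableAt ℝ f x) :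
    pd i (fun y => c * f y) x = c * pd i f x := by
  simp [pd, fderiv_const_mul hf]

theorem pd_exp (hf : DifferentiableAt ℝ f x) :
    pd i (fun y => Real.exp (f y)) x = Real.exp (f x) * pd i f x := by
  simp [pd, fderiv_exp hf]

theorem pd_sum {ι : Type*} {s : Finset ι} {F : ι → (Fin n → ℝ) → ℝ}
    (h : ∀ k ∈ s, DifferentiableAt ℝ (F k) x) :
    pd i (fun y => ∑ k ∈ s, F k y) x = ∑ k ∈ s, pd i (F k) x := by
  simp [pd, fderiv_fun_sum h]

theorem pd_lap (hf : ContDiff ℝ 3 f) (i : Fin n) : pd i (lap f) = lap (pd i f) := by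
  funext x
  have hpd : ∀ k, ContDiff ℝ 2 (pd k f) := fun k => hf.pd (by norm_num) k
  change pd i (fun y => ∑ k, pd2 k k f y) x = _
  rw [pd_sum fun k _ => (hf.pd2 (m := 1) (by norm_num) k k).differentiable one_ne_zero x]
  refine Finset.sum_congr rfl fun k _ => ?_
  rw [pd2, pd2, pd_comm (hpd k) i k, pd_comm (hf.of_le (by norm_num)) i k]

theorem pd2_lap (hf : ContDiff ℝ 4 f) (i j : Fin n) : pd2 i j (lap f) = lap (pd2 i j f) := by
  rw [pd2, pd_lap (hf.of_le (by norm_num)), pd_lap (hf.pd (by norm_num) j), pd2]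

end PartialDerivatives

noncomputable def expWeightedLap {n : ℕ} (φ : (Fin n → ℝ) → ℝ) (μ : ℝ) : (Fin n → ℝ) → ℝ :=
  fun x => (lap φ x + 2) * Real.exp (-μ * φ x)

section ExpWeightedLap

variable {n : ℕ} {φ : (Fin n → ℝ) → ℝ} {μ : ℝ} {p : Fin n → ℝ}

theorem ContDiff.expWeightedLap (hφ : ContDiff ℝ 4 φ) (μ : ℝ) :
    ContDiff ℝ 2 (expWeightedLap φ μ) :=
  ((hφ.lap (by norm_num)).add contDiff_const).mul (contDiff_const.mul (hφ.of_le (by norm_num))).exp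

theorem pd_expWeightedLap (hφ : ContDiff ℝ 3 φ) (a : Fin n) (x : Fin n → ℝ) :
    pd a (expWeightedLap φ μ) x =
      (pd a (lap φ) x - μ * (lap φ x + 2) * pd a φ x) * Real.exp (-μ * φ x) := by
  have hφx : DifferentiableAt ℝ φ x := hφ.differentiable (by norm_num) x
  have hlapx : DifferentiableAt ℝ (lap φ) x :=
    (hφ.lap (m := 1) (by norm_num)).differentiable one_ne_zero x
  unfold expWeightedLap
  rw [pd_mul (hlapx.add_const 2) (hφx.const_mul (-μ)).exp, pd_add_const,
    pd_exp (hφx.const_mul (-μ)), pd_const_mul _ hφx]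
  ring

theorem pd_lap_of_isLocalMax (hφ : ContDiff ℝ 3 φ) (h : IsLocalMax (expWeightedLap φ μ) p)
    (a : Fin n) : pd a (lap φ) p = μ * (lap φ p + 2) * pd a φ p := by
  have hcrit : pd a (expWeightedLap φ μ) p = 0 := by
    rw [pd, h.fderiv_eq_zero]
    rfl
  rw [pd_expWeightedLap hφ, mul_eq_zero] at hcrit
  exact sub_eq_zero.1 (hcrit.resolve_right (Real.exp_ne_zero _))

theorem pd2_expWeightedLap_of_isLocalMax (hφ : ContDiff ℝ 4 φ)
    (h : IsLocalMax (expWeightedLap φ μ) p) (a b : Fin n) :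
    pd2 a b (expWeightedLap φ μ) p = -eta φ μ a b p * Real.exp (-μ * φ p) := by
  have hφ3 : ContDiff ℝ 3 φ := hφ.of_le (by norm_num)
  have hlapd : DifferentiableAt ℝ (lap φ) p :=
    (hφ.lap (m := 1) (by norm_num)).differentiable one_ne_zero p
  have hlap : DifferentiableAt ℝ (fun x => μ * (lap φ x + 2)) p := (hlapd.add_const 2).const_mul μ
  have hpdlap : ContDiff ℝ 1 (pd b (lap φ)) := (hφ.lap (m := 2) le_rfl).pd (by norm_num) b
  have hpdφ : DifferentiableAt ℝ (pd b φ) p :=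
    (hφ.pd (m := 1) (by norm_num) b).differentiable one_ne_zero p
  set D : (Fin n → ℝ) → ℝ := fun x => pd b (lap φ) x - μ * (lap φ x + 2) * pd b φ x
  have hD : DifferentiableAt ℝ D p :=
    (hpdlap.differentiable one_ne_zero p).sub (hlap.fun_mul hpdφ)
  have hD0 : D p = 0 := sub_eq_zero.2 (pd_lap_of_isLocalMax hφ3 h b)
  have hpdD : pd a D p =
      lap (pd2 a b φ) p - (μ * pd a (lap φ) p * pd b φ p + μ * (lap φ p + 2) * pd2 a b φ p) := by
    simp only [D]
    rw [pd_sub (hpdlap.differentiable one_ne_zero p) (hlap.fun_mul hpdφ), pd_mul hlap hpdφ,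
      pd_const_mul _ (hlapd.add_const 2), pd_add_const, ← pd2, pd2_lap hφ]
    rfl
  calc pd2 a b (expWeightedLap φ μ) p
      = pd a (fun x => D x * Real.exp (-μ * φ x)) p := by
        rw [pd2, funext (pd_expWeightedLap (μ := μ) hφ3 b)]
    _ = pd a D p * Real.exp (-μ * φ p) := by
        rw [pd_mul hD (((hφ3.differentiable (by norm_num) p).const_mul (-μ)).exp), hD0]
        ring
    _ = -eta φ μ a b p * Real.exp (-μ * φ p) := by
        rw [hpdD, pd_lap_of_isLocalMax hφ3 h a, eta]
        ring

theorem eta_eq_neg_exp_mul_fderiv_fderiv (hφ : ContDiff ℝ 4 φ)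
    (h : IsLocalMax (expWeightedLap φ μ) p) (a b : Fin n) :
    eta φ μ a b p = -Real.exp (μ * φ p) *
      fderiv ℝ (fderiv ℝ (expWeightedLap φ μ)) p (Pi.single a 1) (Pi.single b 1) := by
  have hexp : Real.exp (μ * φ p) * Real.exp (-μ * φ p) = 1 := by
    rw [← Real.exp_add, neg_mul, add_neg_cancel, Real.exp_zero]
  rw [← pd2_eq_fderiv_fderiv (hφ.expWeightedLap μ), pd2_expWeightedLap_of_isLocalMax hφ h]
  linear_combination (-eta φ μ a b p) * hexp

end ExpWeightedLap

theorem eta_at_max_point_general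
    (n : ℕ) (φ : (Fin n → ℝ) → ℝ)
    (hφ : ContDiff ℝ 4 φ) (μ : ℝ) (p₀ : Fin n → ℝ)
    (hmax : ∀ x : Fin n → ℝ,
      (lap φ x + 2) * Real.exp (-μ * φ x) ≤ (lap φ p₀ + 2) * Real.exp (-μ * φ p₀)) :
    ∀ i j : Fin n,
      0 ≤ eta φ μ i i p₀ ∧
      |eta φ μ i j p₀| ≤ Real.sqrt (eta φ μ i i p₀ * eta φ μ j j p₀) := by
  have hloc : IsLocalMax (expWeightedLap φ μ) p₀ := Filter.Eventually.of_forall hmax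
  set B : LinearMap.BilinForm ℝ (Fin n → ℝ) := Real.exp (μ * φ p₀) •
    -(fderiv ℝ (fderiv ℝ (expWeightedLap φ μ)) p₀).toLinearMap₁₂
  have hB : B.IsPosSemidef :=
    (hloc.isPosSemidef_neg_fderiv_fderiv (hφ.expWeightedLap μ)).smul (Real.exp_pos _).le
  have hBeta : ∀ a b, eta φ μ a b p₀ = B (Pi.single a 1) (Pi.single b 1) := fun a b => by
    simp [B, eta_eq_neg_exp_mul_fderiv_fderiv hφ hloc]
  intro i j
  rw [hBeta, hBeta, hBeta]
  exact ⟨hB.nonneg _, Real.abs_le_sqrt (hB.sq_apply_le_mul_apply_self _ _)⟩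

/-- At a maximum point of `Φ = (Δφ+2)e^{−μφ}` one has `η_{ii} ≥ 0` and
`√(η_{ii}η_{jj}) ≥ |η_{ij}|`. -/
theorem eta_at_max_point
    (n : ℕ) (hn : 1 ≤ n) (φ : (Fin n → ℝ) → ℝ)
    (hφ : ContDiff ℝ 4 φ) (hφper : PeriodicPi φ) (μ : ℝ) (p₀ : Fin n → ℝ)
    (hmax : ∀ x : Fin n → ℝ,
      (lap φ x + 2) * Real.exp (-μ * φ x) ≤ (lap φ p₀ + 2) * Real.exp (-μ * φ p₀)) :
    ∀ i j : Fin n,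
      0 ≤ eta φ μ i i p₀ ∧
      |eta φ μ i j p₀| ≤ Real.sqrt (eta φ μ i i p₀ * eta φ μ j j p₀) :=
  eta_at_max_point_general n φ hφ μ p₀ hmax
end

section
/- Let A, B, a₁, a₂, a₃, a₄, E be real numbers with B > 0 and AB − (a₁²+a₂²+a₃²+a₄²) = E > 0. Consider the symmetric 6×6 matrix Q with rows (B,0,0,0,−|a₃|,−|a₂|), (0,B,0,0,−|a₄|,−|a₁|), (0,0,B,0,−|a₁|,−|a₄|), (0,0,0,B,−|a₂|,−|a₃|), (−|a₃|,−|a₄|,−|a₁|,−|a₂|,A,0), (−|a₂|,−|a₁|,−|a₄|,−|a₃|,0,A). Then Q is positive definite if and only if 2(|a₂a₃| + |a₁a₄|) < E. -/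
/-!
Write `Q = [[B • 1, -C], [-Cᴴ, A • 1]]` with `C` the `4 × 2` block of the `|aᵢ|`. Both columns
of `C` have squared length `∑ aᵢ²` and they have inner product `2p`, `p = |a₂a₃| + |a₁a₄|`, so
the Schur complement of the positive block `B • 1` is `B⁻¹ • [[E, -2p], [-2p, E]]`. Hence `Q` is
positive definite iff this `2 × 2` matrix is, i.e. iff `2p < E`.
-/

open scoped ComplexOrder

namespace Matrix

theorem posDef_submatrix_equiv {m n R : Type*} [Ring R] [PartialOrder R] [StarRing R]
    {M : Matrix n n R} (e : m ≃ n) : (M.submatrix e e).PosDef ↔ M.PosDef :=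
  ⟨fun h => by simpa using h.submatrix e.symm.injective, fun h => h.submatrix e.injective⟩

section SchurComplement

variable {m n R : Type*} [Fintype m] [Fintype n]
  [CommRing R] [PartialOrder R] [StarRing R] [StarOrderedRing R]

theorem PosDef.posDef_fromBlocks₁₁_iff [DecidableEq m] {A : Matrix m m R} (B : Matrix m n R)
    (D : Matrix n n R) (hA : A.PosDef) [Invertible A] :
    (fromBlocks A B Bᴴ D).PosDef ↔ (D - Bᴴ * A⁻¹ * B).PosDef := by
  simp only [posDef_iff_dotProduct_mulVec, IsHermitian.fromBlocks₁₁ _ _ hA.1]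
  refine and_congr_right fun _ => ⟨fun h y hy => ?_, fun h z hz => ?_⟩
  · have := h (x := -((A⁻¹ * B) *ᵥ y) ⊕ᵥ y) fun h0 => hy (by simpa using congrArg (· ∘ Sum.inr) h0)
    rwa [dotProduct_mulVec, schur_complement_eq₁₁ B D _ _ hA.1, neg_add_cancel, dotProduct_zero,
      zero_add, ← dotProduct_mulVec] at this
  · rw [dotProduct_mulVec, ← Sum.elim_comp_inl_inr z, schur_complement_eq₁₁ B D _ _ hA.1,
      ← dotProduct_mulVec, ← dotProduct_mulVec]
    obtain hy | hy := eq_or_ne (z ∘ Sum.inr) 0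
    · have hx : z ∘ Sum.inl ≠ 0 := fun hx => hz <| by
        rw [← Sum.elim_comp_inl_inr z, hx, hy, Sum.elim_zero_zero]
      simpa [hy] using hA.dotProduct_mulVec_pos hx
    · exact add_pos_of_nonneg_of_pos (hA.posSemidef.dotProduct_mulVec_nonneg _) (h hy)

end SchurComplement

section RCLike

variable {m n 𝕜 : Type*} [RCLike 𝕜]

theorem posDef_smul_iff {c : ℝ} (hc : 0 < c) {M : Matrix n n 𝕜} : (c • M).PosDef ↔ M.PosDef :=
  ⟨fun h => by simpa [smul_smul, hc.ne'] using h.smul (inv_pos.2 hc), fun h => h.smul hc⟩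

theorem posDef_fromBlocks_smul_one_iff [Fintype m] [Fintype n] [DecidableEq m] {c : ℝ}
    (hc : 0 < c) (B : Matrix m n 𝕜) (D : Matrix n n 𝕜) :
    (fromBlocks (c • 1) B Bᴴ D).PosDef ↔ (c • D - Bᴴ * B).PosDef := by
  have hinv : (c • 1 : Matrix m m 𝕜) * (c⁻¹ • 1) = 1 := by simp [smul_smul, hc.ne']
  let _ := invertibleOfRightInverse _ _ hinv
  rw [(PosDef.one.smul hc).posDef_fromBlocks₁₁_iff, inv_eq_right_inv hinv, ← posDef_smul_iff hc,
    smul_sub, Matrix.mul_smul, Matrix.mul_one, Matrix.smul_mul, smul_smul,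
    mul_inv_cancel₀ hc.ne', one_smul]

end RCLike

theorem posDef_circulant_fin_two_iff {a b : ℝ} : !![a, b; b, a].PosDef ↔ |b| < a := by
  have hquad (x : Fin 2 → ℝ) : star x ⬝ᵥ (!![a, b; b, a] *ᵥ x) =
      a * (x 0 ^ 2 + x 1 ^ 2) + 2 * b * x 0 * x 1 := by
    simp only [dotProduct, Pi.star_apply, star_trivial, mulVec, of_apply, cons_val',
      cons_val_fin_one, Fin.sum_univ_two, cons_val_zero, cons_val_one]
    ring
  have hherm : !![a, b; b, a].IsHermitian := by
    ext i j; fin_cases i <;> fin_cases j <;> rfl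
  simp only [posDef_iff_dotProduct_mulVec, hquad, hherm, true_and]
  constructor
  · intro h
    have h₁ := h (x := ![1, -1]) (by simp)
    have h₂ := h (x := ![1, 1]) (by simp)
    norm_num at h₁ h₂
    exact abs_lt.2 ⟨by linarith, by linarith⟩
  · intro h x hx
    have hx' : 0 < x 0 ^ 2 + x 1 ^ 2 := by
      obtain ⟨i, hi⟩ := Function.ne_iff.1 hx
      fin_cases i
      · exact add_pos_of_pos_of_nonneg (sq_pos_of_ne_zero hi) (sq_nonneg _)
      · exact add_pos_of_nonneg_of_pos (sq_nonneg _) (sq_pos_of_ne_zero hi)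
    have hcross : -(|b| * (x 0 ^ 2 + x 1 ^ 2)) ≤ 2 * b * x 0 * x 1 := by
      rcases abs_cases b with ⟨hb, -⟩ | ⟨hb, -⟩ <;> rw [hb] <;>
        nlinarith [abs_nonneg b, sq_nonneg (x 0 + x 1), sq_nonneg (x 0 - x 1)]
    nlinarith [mul_pos (sub_pos.2 h) hx']

end Matrix

open Matrix

def coupling (a₁ a₂ a₃ a₄ : ℝ) : Matrix (Fin 4) (Fin 2) ℝ :=
  !![|a₃|, |a₂|; |a₄|, |a₁|; |a₁|, |a₄|; |a₂|, |a₃|]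

theorem coupling_conjTranspose_mul_self (a₁ a₂ a₃ a₄ : ℝ) :
    (coupling a₁ a₂ a₃ a₄)ᴴ * coupling a₁ a₂ a₃ a₄ =
      !![a₁ ^ 2 + a₂ ^ 2 + a₃ ^ 2 + a₄ ^ 2, 2 * (|a₂ * a₃| + |a₁ * a₄|);
        2 * (|a₂ * a₃| + |a₁ * a₄|), a₁ ^ 2 + a₂ ^ 2 + a₃ ^ 2 + a₄ ^ 2] := by
  ext i j
  fin_cases i <;> fin_cases j <;> simp [coupling, mul_apply, Fin.sum_univ_four, abs_mul] <;> ring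

theorem smul_sub_neg_coupling_conjTranspose_mul (A B a₁ a₂ a₃ a₄ : ℝ) :
    B • (A • 1 : Matrix (Fin 2) (Fin 2) ℝ) - (-coupling a₁ a₂ a₃ a₄)ᴴ * -coupling a₁ a₂ a₃ a₄ =
      !![A * B - (a₁ ^ 2 + a₂ ^ 2 + a₃ ^ 2 + a₄ ^ 2), -(2 * (|a₂ * a₃| + |a₁ * a₄|));
        -(2 * (|a₂ * a₃| + |a₁ * a₄|)), A * B - (a₁ ^ 2 + a₂ ^ 2 + a₃ ^ 2 + a₄ ^ 2)] := by
  rw [conjTranspose_neg, Matrix.neg_mul, Matrix.mul_neg, neg_neg,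
    coupling_conjTranspose_mul_self, smul_smul]
  ext i j
  fin_cases i <;> fin_cases j <;> simp [mul_comm]

theorem submatrix_finSumFinEquiv_eq_fromBlocks_coupling (A B a₁ a₂ a₃ a₄ : ℝ) :
    (!![B, 0, 0, 0, -|a₃|, -|a₂|;
        0, B, 0, 0, -|a₄|, -|a₁|;
        0, 0, B, 0, -|a₁|, -|a₄|;
        0, 0, 0, B, -|a₂|, -|a₃|;
        -|a₃|, -|a₄|, -|a₁|, -|a₂|, A, 0;
        -|a₂|, -|a₁|, -|a₄|, -|a₃|, 0, A] : Matrix (Fin 6) (Fin 6) ℝ).submatrix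
        finSumFinEquiv finSumFinEquiv =
      fromBlocks (B • 1) (-coupling a₁ a₂ a₃ a₄) (-coupling a₁ a₂ a₃ a₄)ᴴ (A • 1) := by
  ext (i | i) (j | j) <;> fin_cases i <;> fin_cases j <;> simp [coupling] <;> rfl

theorem Q6_posDef_iff_general
    (A B E a₁ a₂ a₃ a₄ : ℝ) (hB : 0 < B)
    (hE : A * B - (a₁ ^ 2 + a₂ ^ 2 + a₃ ^ 2 + a₄ ^ 2) = E)
    (Q : Matrix (Fin 6) (Fin 6) ℝ)
    (hQ : Q = !![B, 0, 0, 0, -|a₃|, -|a₂|;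
                 0, B, 0, 0, -|a₄|, -|a₁|;
                 0, 0, B, 0, -|a₁|, -|a₄|;
                 0, 0, 0, B, -|a₂|, -|a₃|;
                 -|a₃|, -|a₄|, -|a₁|, -|a₂|, A, 0;
                 -|a₂|, -|a₁|, -|a₄|, -|a₃|, 0, A]) :
    Q.PosDef ↔ 2 * (|a₂ * a₃| + |a₁ * a₄|) < E := by
  subst hQ
  rw [← posDef_submatrix_equiv (finSumFinEquiv : Fin 4 ⊕ Fin 2 ≃ Fin 6),
    submatrix_finSumFinEquiv_eq_fromBlocks_coupling,
    posDef_fromBlocks_smul_one_iff hB, smul_sub_neg_coupling_conjTranspose_mul, hE,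
    posDef_circulant_fin_two_iff, abs_neg, abs_of_nonneg (by positivity)]

/-- The `6×6` matrix of the quadratic form from Section 7 of the paper is positive
definite if and only if `2(|a₂a₃| + |a₁a₄|) < E`. -/
theorem Q6_posDef_iff
    (A B E a₁ a₂ a₃ a₄ : ℝ) (hB : 0 < B)
    (hE : A * B - (a₁ ^ 2 + a₂ ^ 2 + a₃ ^ 2 + a₄ ^ 2) = E) (hEpos : 0 < E)
    (Q : Matrix (Fin 6) (Fin 6) ℝ)
    (hQ : Q = !![B, 0, 0, 0, -|a₃|, -|a₂|;
                 0, B, 0, 0, -|a₄|, -|a₁|;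
                 0, 0, B, 0, -|a₁|, -|a₄|;
                 0, 0, 0, B, -|a₂|, -|a₃|;
                 -|a₃|, -|a₄|, -|a₁|, -|a₂|, A, 0;
                 -|a₂|, -|a₁|, -|a₄|, -|a₃|, 0, A]) :
    Q.PosDef ↔ 2 * (|a₂ * a₃| + |a₁ * a₄|) < E :=
  Q6_posDef_iff_general A B E a₁ a₂ a₃ a₄ hB hE Q hQ
end

section
/- Let A, B, a₁, a₂, a₃, a₄, E be real numbers with B > 0 and AB − (a₁²+a₂²+a₃²+a₄²) = E > 0. Consider the quadratic form on ℝ⁷ given by Q(ξ) = B(ξ₁²+ξ₂²+ξ₃²+ξ₄²) + A(ξ₅²+ξ₆²+ξ₇²) − 2|a₁|(ξ₄ξ₅+ξ₁ξ₆+ξ₂ξ₇) − 2|a₂|(ξ₃ξ₅+ξ₁ξ₇+ξ₂ξ₆) − 2|a₃|(ξ₃ξ₆+ξ₄ξ₇+ξ₂ξ₅) − 2|a₄|(ξ₄ξ₆+ξ₃ξ₇+ξ₁ξ₅). Then Q is positive definite if and only if both E² − 4(|a₂a₃|+|a₁a₄|)² > 0 and E³ − 4E((|a₂a₃|+|a₁a₄|)²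 + (|a₁a₃|+|a₂a₄|)² + (|a₁a₂|+|a₃a₄|)²) − 16(|a₂a₃|+|a₁a₄|)(|a₁a₃|+|a₂a₄|)(|a₁a₂|+|a₃a₄|) > 0. -/
/-!
Write `ξ = (x, y) ∈ ℝ⁴ × ℝ³` and `αᵢ = |aᵢ|`. Then `Q(ξ) = B‖x‖² - 2⟪x, C y⟫ + A‖y‖²` for the
`4 × 3` block `C = quadForm7CrossBlock`, and `CᵀC = (Σ αᵢ²) I + 2 N`, where `N` has zero diagonal
and off-diagonal entries `p = α₂α₃ + α₁α₄`, `q = α₁α₃ + α₂α₄`, `r = α₁α₂ + α₃α₄`.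
Completing the square in `x` gives `B Q(ξ) = ‖B x - C y‖² + T(y)`, where the Schur complement
`T(y) = (AB) ‖y‖² - ‖C y‖²` is the ternary form of the matrix
`[[E, -2p, -2q], [-2p, E, -2r], [-2q, -2r, E]]`. Hence `Q > 0` iff `T > 0`, and Sylvester's
criterion for `T` (whose first minor is `E > 0`) is exactly the pair of stated inequalities.
-/

open Finset

def quadForm7 (A B α β γ δ : ℝ) (ξ : Fin 7 → ℝ) : ℝ :=
  B * ((ξ 0) ^ 2 + (ξ 1) ^ 2 + (ξ 2) ^ 2 + (ξ 3) ^ 2)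
    + A * ((ξ 4) ^ 2 + (ξ 5) ^ 2 + (ξ 6) ^ 2)
    - 2 * α * (ξ 3 * ξ 4 + ξ 0 * ξ 5 + ξ 1 * ξ 6)
    - 2 * β * (ξ 2 * ξ 4 + ξ 0 * ξ 6 + ξ 1 * ξ 5)
    - 2 * γ * (ξ 2 * ξ 5 + ξ 3 * ξ 6 + ξ 1 * ξ 4)
    - 2 * δ * (ξ 3 * ξ 5 + ξ 2 * ξ 6 + ξ 0 * ξ 4)

def quadForm7CrossBlock (α β γ δ : ℝ) (y : Fin 3 → ℝ) : Fin 4 → ℝ :=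
  ![δ * y 0 + α * y 1 + β * y 2, γ * y 0 + β * y 1 + α * y 2,
    β * y 0 + γ * y 1 + δ * y 2, α * y 0 + δ * y 1 + γ * y 2]

def ternaryForm (E p q r : ℝ) (y : Fin 3 → ℝ) : ℝ :=
  E * (y 0 ^ 2 + y 1 ^ 2 + y 2 ^ 2) - 4 * p * y 0 * y 1 - 4 * q * y 0 * y 2 - 4 * r * y 1 * y 2

def ternaryDet (E p q r : ℝ) : ℝ :=
  E ^ 3 - 4 * E * (p ^ 2 + q ^ 2 + r ^ 2) - 16 * p * q * r

theorem Fin.append_eq_zero_iff {M : Type*} [Zero M] {m n : ℕ} {x : Fin m → M} {y : Fin n → M} :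
    Fin.append x y = 0 ↔ x = 0 ∧ y = 0 := by
  refine ⟨fun h => ⟨funext fun i => ?_, funext fun i => ?_⟩, fun ⟨hx, hy⟩ => ?_⟩
  · simpa using congrFun h (Fin.castAdd n i)
  · simpa using congrFun h (Fin.natAdd m i)
  · subst hx hy
    exact funext fun i => Fin.addCases (fun _ => by simp) (fun _ => by simp) i

theorem forall_pos_iff_schurComplement {m n : ℕ} {B : ℝ} (hB : 0 < B)
    {Q : (Fin (m + n) → ℝ) → ℝ} {C : (Fin n → ℝ) → Fin m → ℝ} {S : (Fin n → ℝ) → ℝ}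
    (hC : C 0 = 0) (hS : S 0 = 0)
    (hQ : ∀ x y, B * Q (Fin.append x y) = ∑ i, (B * x i - C y i) ^ 2 + S y) :
    (∀ ξ, ξ ≠ 0 → 0 < Q ξ) ↔ ∀ y, y ≠ 0 → 0 < S y := by
  have hQ_pos x y : 0 < Q (Fin.append x y) ↔ 0 < ∑ i, (B * x i - C y i) ^ 2 + S y := by
    rw [← hQ, mul_pos_iff_of_pos_left hB]
  rw [← (Fin.appendEquiv m n).forall_congr_right, Prod.forall]
  change (∀ x y, Fin.append x y ≠ 0 → 0 < Q (Fin.append x y)) ↔ _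
  simp only [ne_eq, Fin.append_eq_zero_iff, not_and_or, hQ_pos]
  constructor
  · intro h y hy
    simpa [mul_div_cancel₀ _ hB.ne'] using h (fun i => C y i / B) y (Or.inr hy)
  · rintro h x y hxy
    rcases eq_or_ne y 0 with rfl | hy
    · obtain ⟨i, hi⟩ := Function.ne_iff.mp (hxy.resolve_right (not_not.mpr rfl))
      simp only [hC, hS, Pi.zero_apply, sub_zero, add_zero]
      exact sum_pos' (fun j _ => sq_nonneg _)
        ⟨i, mem_univ i, pow_two_pos_of_ne_zero (mul_ne_zero hB.ne' hi)⟩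
    · exact add_pos_of_nonneg_of_pos (sum_nonneg fun i _ => sq_nonneg _) (h y hy)

theorem mul_quadForm7_append {A B E α β γ δ : ℝ} (hAB : A * B = E + (α ^ 2 + β ^ 2 + γ ^ 2 + δ ^ 2))
    (x : Fin 4 → ℝ) (y : Fin 3 → ℝ) :
    B * quadForm7 A B α β γ δ (Fin.append x y)
      = ∑ i, (B * x i - quadForm7CrossBlock α β γ δ y i) ^ 2
        + ternaryForm E (β * γ + α * δ) (α * γ + β * δ) (α * β + γ * δ) y := by
  have hξ : Fin.append x y = ![x 0, x 1, x 2, x 3, y 0, y 1, y 2] := by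
    ext i; fin_cases i <;> rfl
  simp only [hξ, quadForm7, quadForm7CrossBlock, ternaryForm, Fin.sum_univ_four, Matrix.cons_val]
  linear_combination (y 0 ^ 2 + y 1 ^ 2 + y 2 ^ 2) * hAB

theorem mul_ternaryForm (E p q r : ℝ) (y : Fin 3 → ℝ) :
    E * (E ^ 2 - 4 * p ^ 2) * ternaryForm E p q r y
      = (E ^ 2 - 4 * p ^ 2) * (E * y 0 - 2 * p * y 1 - 2 * q * y 2) ^ 2
        + ((E ^ 2 - 4 * p ^ 2) * y 1 - (2 * r * E + 4 * p * q) * y 2) ^ 2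
        + E * ternaryDet E p q r * y 2 ^ 2 := by
  simp only [ternaryForm, ternaryDet]
  ring

theorem ternaryForm_posDef_iff {E p q r : ℝ} (hE : 0 < E) :
    (∀ y, y ≠ 0 → 0 < ternaryForm E p q r y) ↔
      0 < E ^ 2 - 4 * p ^ 2 ∧ 0 < ternaryDet E p q r := by
  constructor
  · intro h
    have hminor : 0 < E ^ 2 - 4 * p ^ 2 := by
      have h_one_one := h ![1, 1, 0] (by simp)
      have h_one_neg := h ![1, -1, 0] (by simp)
      simp only [ternaryForm, Matrix.cons_val] at h_one_one h_one_neg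
      nlinarith
    refine ⟨hminor, ?_⟩
    -- cofactor vector of the first two rows: it kills both squares in `mul_ternaryForm`
    set y : Fin 3 → ℝ := ![2 * p * (2 * r * E + 4 * p * q) + 2 * q * (E ^ 2 - 4 * p ^ 2),
      E * (2 * r * E + 4 * p * q), E * (E ^ 2 - 4 * p ^ 2)] with hy
    have hy₂ : 0 < y 2 := mul_pos hE hminor
    have hT : 0 < E * ternaryDet E p q r * y 2 ^ 2 := by
      have hkill : E * (E ^ 2 - 4 * p ^ 2) * ternaryForm E p q r y
          = E * ternaryDet E p q r * y 2 ^ 2 := by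
        rw [mul_ternaryForm]
        simp only [hy, Matrix.cons_val]
        ring
      rw [← hkill]
      exact mul_pos (mul_pos hE hminor) (h y fun h0 => hy₂.ne' (by simp [h0]))
    exact pos_of_mul_pos_right (pos_of_mul_pos_left hT (sq_nonneg _)) hE.le
  · rintro ⟨hminor, hdet⟩ y hy
    refine pos_of_mul_pos_right ?_ (mul_pos hE hminor).le
    rw [mul_ternaryForm]
    rcases ne_or_eq (y 2) 0 with hy₂ | hy₂
    · exact add_pos_of_nonneg_of_pos
        (add_nonneg (mul_nonneg hminor.le (sq_nonneg _)) (sq_nonneg _))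
        (mul_pos (mul_pos hE hdet) (pow_two_pos_of_ne_zero hy₂))
    rcases ne_or_eq (y 1) 0 with hy₁ | hy₁
    · simp only [hy₂, mul_zero, sub_zero, ne_eq, OfNat.ofNat_ne_zero, not_false_eq_true,
        zero_pow, add_zero]
      exact add_pos_of_nonneg_of_pos (mul_nonneg hminor.le (sq_nonneg _))
        (pow_two_pos_of_ne_zero (mul_ne_zero hminor.ne' hy₁))
    have hy₀ : y 0 ≠ 0 := fun hy₀ => hy (by ext i; fin_cases i <;> assumption)
    simp only [hy₁, hy₂, mul_zero, sub_zero, ne_eq, OfNat.ofNat_ne_zero, not_false_eq_true,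
      zero_pow, add_zero]
    exact mul_pos hminor (pow_two_pos_of_ne_zero (mul_ne_zero hE.ne' hy₀))

theorem quadForm7_posDef_iff {A B E α β γ δ : ℝ} (hB : 0 < B)
    (hAB : A * B = E + (α ^ 2 + β ^ 2 + γ ^ 2 + δ ^ 2)) :
    (∀ ξ, ξ ≠ 0 → 0 < quadForm7 A B α β γ δ ξ) ↔
      ∀ y, y ≠ 0 → 0 < ternaryForm E (β * γ + α * δ) (α * γ + β * δ) (α * β + γ * δ) y :=
  forall_pos_iff_schurComplement hB (C := quadForm7CrossBlock α β γ δ)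
    (by ext i; fin_cases i <;> simp [quadForm7CrossBlock]) (by simp [ternaryForm])
    (mul_quadForm7_append hAB)

/-- The quadratic form on `ℝ⁷` from Section 7 of the paper is positive definite if and
only if the two stated determinant conditions hold. -/
theorem Q7_posDef_iff
    (A B E a₁ a₂ a₃ a₄ : ℝ) (hB : 0 < B)
    (hE : A * B - (a₁ ^ 2 + a₂ ^ 2 + a₃ ^ 2 + a₄ ^ 2) = E) (hEpos : 0 < E) :
    (∀ ξ : Fin 7 → ℝ, ξ ≠ 0 →
      0 < B * ((ξ 0) ^ 2 + (ξ 1) ^ 2 + (ξ 2) ^ 2 + (ξ 3) ^ 2)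
          + A * ((ξ 4) ^ 2 + (ξ 5) ^ 2 + (ξ 6) ^ 2)
          - 2 * |a₁| * (ξ 3 * ξ 4 + ξ 0 * ξ 5 + ξ 1 * ξ 6)
          - 2 * |a₂| * (ξ 2 * ξ 4 + ξ 0 * ξ 6 + ξ 1 * ξ 5)
          - 2 * |a₃| * (ξ 2 * ξ 5 + ξ 3 * ξ 6 + ξ 1 * ξ 4)
          - 2 * |a₄| * (ξ 3 * ξ 5 + ξ 2 * ξ 6 + ξ 0 * ξ 4))
    ↔ (0 < E ^ 2 - 4 * (|a₂ * a₃| + |a₁ * a₄|) ^ 2 ∧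
        0 < E ^ 3
          - 4 * E * ((|a₂ * a₃| + |a₁ * a₄|) ^ 2 + (|a₁ * a₃| + |a₂ * a₄|) ^ 2
              + (|a₁ * a₂| + |a₃ * a₄|) ^ 2)
          - 16 * (|a₂ * a₃| + |a₁ * a₄|) * (|a₁ * a₃| + |a₂ * a₄|)
              * (|a₁ * a₂| + |a₃ * a₄|)) := by
  have hAB : A * B = E + (|a₁| ^ 2 + |a₂| ^ 2 + |a₃| ^ 2 + |a₄| ^ 2) := by
    simp only [sq_abs]
    linarith
  simp only [abs_mul]
  exact (quadForm7_posDef_iff hB hAB).trans (ternaryForm_posDef_iff hEpos)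
end
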